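/- arXiv:2111.03493 — 2 statements merged into one kernel-verified Lean document; each statement's English description precedes it below -/
import Mathlib

section
/- Let u be a smooth solution of the incompressible Euler equations on 𝕋ᵈ with pressure p. Then the increment field δ_ℓ u satisfies (∂_t + u·∇_x)(δ_ℓ u · ℓ) = -ℓ·∇_x δ_ℓ p - δ_ℓ u · ∇_ℓ (δ_ℓ u · ℓ) + |δ_ℓ u|², pointwise in (x, ℓ, t). -/
open MeasureTheory

/-- The longitudinal increment `δ_ℓ u · ℓ` of a time-dependent velocity field. -/
noncomputable def longInc {d : ℕ} (u : ℝ → EuclideanSpace ℝ (Fin d) → EuclideanSpace ℝ (Fin d))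
    (t : ℝ) (x ℓ : EuclideanSpace ℝ (Fin d)) : ℝ :=
  ∑ i, (u t (x + ℓ) i - u t x i) * ℓ i

/-- The algebraic core of the increment-equation computation. -/
theorem euler_increment_key_alg {n : ℕ} (a b L P Q : Fin n → ℝ) (A B : Fin n → Fin n → ℝ) :
    ∑ i, ((-P i - ∑ j, a j * A j i) - (-Q i - ∑ j, b j * B j i)) * L i
      + ∑ j, b j * ∑ i, L i * (A j i - B j i)
    = -(∑ i, L i * (P i - Q i))
      - ∑ j, (a j - b j) * ((a j - b j) + ∑ i, L i * A j i)
      + ∑ i, (a i - b i) ^ 2 := by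
  have h1 : ∀ i, ((-P i - ∑ j, a j * A j i) - (-Q i - ∑ j, b j * B j i)) * L i
      = -(L i * (P i - Q i)) + ∑ j, (b j * (L i * B j i) - a j * (L i * A j i)) := by
    intro i
    have h2 : ∑ j, (b j * (L i * B j i) - a j * (L i * A j i))
        = (∑ j, b j * B j i) * L i - (∑ j, a j * A j i) * L i := by
      rw [Finset.sum_mul, Finset.sum_mul, ← Finset.sum_sub_distrib]
      exact Finset.sum_congr rfl fun j _ => by ring
    rw [h2]; ring
  simp only [h1]
  rw [Finset.sum_add_distrib, Finset.sum_comm (γ := Fin n), add_assoc,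
    ← Finset.sum_add_distrib]
  have h3 : ∀ j ∈ Finset.univ, ((∑ i, (b j * (L i * B j i) - a j * (L i * A j i)))
      + b j * ∑ i, L i * (A j i - B j i))
      = -((a j - b j) * (∑ i, L i * A j i)) := by
    intro j _
    have h5 : -((a j - b j) * (∑ i, L i * A j i))
        = ∑ i, -((a j - b j) * (L i * A j i)) := by
      rw [Finset.mul_sum, ← Finset.sum_neg_distrib]
    rw [Finset.mul_sum, ← Finset.sum_add_distrib, h5]
    exact Finset.sum_congr rfl fun x _ => by ring
  rw [Finset.sum_congr rfl h3, Finset.sum_neg_distrib]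
  have h4 : ∑ j, (a j - b j) * ((a j - b j) + ∑ i, L i * A j i)
      = ∑ j, (a j - b j) ^ 2 + ∑ j, ((a j - b j) * ∑ i, L i * A j i) := by
    rw [← Finset.sum_add_distrib]
    exact Finset.sum_congr rfl fun j _ => by ring
  rw [h4, Finset.sum_neg_distrib]
  ring

/-- **The increment equation for smooth Euler solutions.**
If `(u, p)` is a smooth solution of the incompressible Euler equations on `𝕋ᵈ`
(`∂_t u + u·∇u = -∇p`, `∇·u = 0`), then pointwise in `(x, ℓ, t)`:
`(∂_t + u·∇_x)(δ_ℓ u · ℓ) = -ℓ·∇_x δ_ℓ p - δ_ℓ u · ∇_ℓ (δ_ℓ u · ℓ) + |δ_ℓ u|²`. -/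
theorem euler_increment_equation {d : ℕ}
    (u : ℝ → EuclideanSpace ℝ (Fin d) → EuclideanSpace ℝ (Fin d))
    (p : ℝ → EuclideanSpace ℝ (Fin d) → ℝ)
    (hu : ContDiff ℝ (⊤ : ℕ∞) (fun q : ℝ × EuclideanSpace ℝ (Fin d) => u q.1 q.2))
    (hp : ContDiff ℝ (⊤ : ℕ∞) (fun q : ℝ × EuclideanSpace ℝ (Fin d) => p q.1 q.2))
    (heuler : ∀ (t : ℝ) (x : EuclideanSpace ℝ (Fin d)) (i : Fin d),
      deriv (fun τ => u τ x i) t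
        + ∑ j, u t x j * fderiv ℝ (fun y => u t y i) x (EuclideanSpace.single j (1:ℝ))
      = - fderiv ℝ (p t) x (EuclideanSpace.single i (1:ℝ)))
    (hdiv : ∀ (t : ℝ) (x : EuclideanSpace ℝ (Fin d)),
      ∑ i, fderiv ℝ (fun y => u t y i) x (EuclideanSpace.single i (1:ℝ)) = 0) :
    ∀ (t : ℝ) (x ℓ : EuclideanSpace ℝ (Fin d)),
      deriv (fun τ => longInc u τ x ℓ) t
        + ∑ j, u t x j * fderiv ℝ (fun y => longInc u t y ℓ) x (EuclideanSpace.single j (1:ℝ))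
      = - (∑ i, ℓ i * fderiv ℝ (fun y => p t (y + ℓ) - p t y) x (EuclideanSpace.single i (1:ℝ)))
        - (∑ j, (u t (x + ℓ) j - u t x j) *
            fderiv ℝ (fun m => longInc u t x m) ℓ (EuclideanSpace.single j (1:ℝ)))
        + ∑ i, (u t (x + ℓ) i - u t x i) ^ 2 := by
  intro t x ℓ
  -- componentwise smoothness and differentiability
  have hui : ∀ i, ContDiff ℝ (⊤ : ℕ∞) (fun q : ℝ × EuclideanSpace ℝ (Fin d) => u q.1 q.2 i) := by
    intro i
    exact (EuclideanSpace.proj (𝕜 := ℝ) i).contDiff.comp hu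
  have hdx : ∀ (s : ℝ) (y : EuclideanSpace ℝ (Fin d)) (i : Fin d),
      DifferentiableAt ℝ (fun z => u s z i) y := fun s y i =>
    ((hui i).comp (contDiff_const.prodMk contDiff_id)).differentiable (by simp) y
  have hdt : ∀ (y : EuclideanSpace ℝ (Fin d)) (i : Fin d) (s : ℝ),
      DifferentiableAt ℝ (fun τ => u τ y i) s := fun y i s =>
    ((hui i).comp (contDiff_id.prodMk contDiff_const)).differentiable (by simp) s
  have hpx : ∀ (s : ℝ) (y : EuclideanSpace ℝ (Fin d)), DifferentiableAt ℝ (p s) y := fun s y =>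
    (hp.comp (contDiff_const.prodMk contDiff_id)).differentiable (by simp) y
  -- shifted derivatives
  have hshift : ∀ i, HasFDerivAt (fun y : EuclideanSpace ℝ (Fin d) => u t (y + ℓ) i)
      (fderiv ℝ (fun z => u t z i) (x + ℓ)) x := fun i => by
    simpa [Function.comp_def] using HasFDerivAt.comp x (hdx t (x + ℓ) i).hasFDerivAt ((hasFDerivAt_id x).add_const ℓ)
  have hshiftm : ∀ i, HasFDerivAt (fun m : EuclideanSpace ℝ (Fin d) => u t (x + m) i)
      (fderiv ℝ (fun z => u t z i) (x + ℓ)) ℓ := fun i => by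
    simpa [Function.comp_def] using HasFDerivAt.comp ℓ (hdx t (x + ℓ) i).hasFDerivAt ((hasFDerivAt_id ℓ).const_add x)
  have hpshift : HasFDerivAt (fun y : EuclideanSpace ℝ (Fin d) => p t (y + ℓ))
      (fderiv ℝ (p t) (x + ℓ)) x := by
    simpa [Function.comp_def] using HasFDerivAt.comp x (hpx t (x + ℓ)).hasFDerivAt ((hasFDerivAt_id x).add_const ℓ)
  -- time derivative of the longitudinal increment
  have hT : deriv (fun τ => longInc u τ x ℓ) t
      = ∑ i, (deriv (fun τ => u τ (x + ℓ) i) t - deriv (fun τ => u τ x i) t) * ℓ i := by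
    have h : HasDerivAt (fun τ => longInc u τ x ℓ)
        (∑ i, (deriv (fun τ => u τ (x + ℓ) i) t - deriv (fun τ => u τ x i) t) * ℓ i) t := by
      simp only [longInc]
      exact HasDerivAt.fun_sum fun i _ =>
        (((hdt (x + ℓ) i t).hasDerivAt).fun_sub ((hdt x i t).hasDerivAt)).mul_const _
    exact h.deriv
  -- spatial derivative of the longitudinal increment
  have hX : ∀ j, fderiv ℝ (fun y => longInc u t y ℓ) x (EuclideanSpace.single j (1:ℝ))
      = ∑ i, ℓ i * (fderiv ℝ (fun y => u t y i) (x + ℓ) (EuclideanSpace.single j (1:ℝ))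
          - fderiv ℝ (fun y => u t y i) x (EuclideanSpace.single j (1:ℝ))) := by
    intro j
    have h : HasFDerivAt (fun y => longInc u t y ℓ)
        (∑ i, ℓ i • ((fderiv ℝ (fun z => u t z i) (x + ℓ))
            - fderiv ℝ (fun z => u t z i) x)) x := by
      simp only [longInc]
      exact HasFDerivAt.fun_sum fun i _ =>
        ((hshift i).fun_sub (hdx t x i).hasFDerivAt).mul_const (ℓ i)
    rw [h.fderiv]
    simp [ContinuousLinearMap.sum_apply, ContinuousLinearMap.smul_apply,
      ContinuousLinearMap.sub_apply, smul_eq_mul]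
  -- ℓ-derivative of the longitudinal increment
  have hL : ∀ j, fderiv ℝ (fun m => longInc u t x m) ℓ (EuclideanSpace.single j (1:ℝ))
      = (u t (x + ℓ) j - u t x j)
        + ∑ i, ℓ i * fderiv ℝ (fun y => u t y i) (x + ℓ) (EuclideanSpace.single j (1:ℝ)) := by
    intro j
    have h : HasFDerivAt (fun m => longInc u t x m)
        (∑ i, ((u t (x + ℓ) i - u t x i) • (EuclideanSpace.proj (𝕜 := ℝ) i)
          + (ℓ i) • (fderiv ℝ (fun z => u t z i) (x + ℓ)))) ℓ := by
      simp only [longInc]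
      refine HasFDerivAt.fun_sum fun i _ => HasFDerivAt.fun_mul ?_ ?_
      · exact (hshiftm i).sub_const (u t x i)
      · exact (EuclideanSpace.proj (𝕜 := ℝ) i).hasFDerivAt
    rw [h.fderiv]
    simp [ContinuousLinearMap.sum_apply, ContinuousLinearMap.add_apply,
      ContinuousLinearMap.smul_apply, smul_eq_mul, EuclideanSpace.single_apply,
      Finset.sum_add_distrib, mul_ite, mul_one, mul_zero, Finset.sum_ite_eq']
  -- derivative of the pressure increment
  have hP : ∀ i, fderiv ℝ (fun y => p t (y + ℓ) - p t y) x (EuclideanSpace.single i (1:ℝ))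
      = fderiv ℝ (p t) (x + ℓ) (EuclideanSpace.single i (1:ℝ))
        - fderiv ℝ (p t) x (EuclideanSpace.single i (1:ℝ)) := by
    intro i
    rw [(hpshift.fun_sub (hpx t x).hasFDerivAt).fderiv]
    simp
  -- Euler equation at x + ℓ and at x
  have hE1 : ∀ i, deriv (fun τ => u τ (x + ℓ) i) t
      = -fderiv ℝ (p t) (x + ℓ) (EuclideanSpace.single i (1:ℝ))
        - ∑ j, u t (x + ℓ) j
            * fderiv ℝ (fun y => u t y i) (x + ℓ) (EuclideanSpace.single j (1:ℝ)) := by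
    intro i; linarith [heuler t (x + ℓ) i]
  have hE2 : ∀ i, deriv (fun τ => u τ x i) t
      = -fderiv ℝ (p t) x (EuclideanSpace.single i (1:ℝ))
        - ∑ j, u t x j * fderiv ℝ (fun y => u t y i) x (EuclideanSpace.single j (1:ℝ)) := by
    intro i; linarith [heuler t x i]
  rw [hT]
  simp only [hX, hL, hP, hE1, hE2]
  exact euler_increment_key_alg (fun i => u t (x + ℓ) i) (fun i => u t x i) (fun i => ℓ i)
    (fun i => fderiv ℝ (p t) (x + ℓ) (EuclideanSpace.single i (1:ℝ)))
    (fun i => fderiv ℝ (p t) x (EuclideanSpace.single i (1:ℝ)))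
    (fun j i => fderiv ℝ (fun y => u t y i) (x + ℓ) (EuclideanSpace.single j (1:ℝ)))
    (fun j i => fderiv ℝ (fun y => u t y i) x (EuclideanSpace.single j (1:ℝ)))
end

section
/- Let F : ℝᵈ → ℝ be continuous with F(0) = 0, and suppose the ball averages satisfy (1/|B_L(0)|) ∫_{B_L(0)} F(ℓ) dℓ ≤ C L^{2s} for all L > 0, where F(ℓ) = ‖δ_ℓ u‖_{L²(𝕋ᵈ)}² for some u ∈ L²(𝕋ᵈ) (so that ℓ ↦ √F(ℓ) is 'translation-subadditive': |√F(ℓ) - √F(ℓ')| ≤ √F(ℓ-ℓ')). Then F(ℓ) ≤ C' |ℓ|^{2s} for all ℓ, with C' depending only on C, s, d. -/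
open MeasureTheory Metric

abbrev Td (d : ℕ) := Fin d → AddCircle (1:ℝ)

noncomputable def shift {d : ℕ} (ℓ : EuclideanSpace ℝ (Fin d)) (x : Td d) : Td d :=
  x + fun i => (ℓ i : AddCircle (1:ℝ))

noncomputable def du {d : ℕ} (u : Td d → EuclideanSpace ℝ (Fin d))
    (ℓ : EuclideanSpace ℝ (Fin d)) (x : Td d) : EuclideanSpace ℝ (Fin d) :=
  u (shift ℓ x) - u x

/-!
Splitting `δ_ℓ u = (δ_{ℓ-x} u)(· + x) + δ_x u` and using translation invariance of the torus
measure gives the quasi-triangle inequality `F ℓ ≤ 2 F (ℓ - x) + 2 F x`. Averaging it over `x`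
in the ball of radius `|ℓ|/2` centred at `ℓ/2`, which the reflection `x ↦ ℓ - x` maps to itself,
bounds `F ℓ` by four times the average of `F` over that ball; since `F ≥ 0` and the ball sits
inside `B_{|ℓ|}(0)` with volume ratio `2^{-d}`, this is at most `2^{d+2} C |ℓ|^{2s}`.
-/

open Module

section StructureFunction

variable {G E : Type*} [AddCommGroup G] [MeasurableSpace G] [NormedAddCommGroup E] (μ : Measure G)

noncomputable def structureFunction (u : G → E) (g : G) : ℝ :=
  ∫ x, ‖u (x + g) - u x‖ ^ 2 ∂μ

lemma structureFunction_nonneg (u : G → E) (g : G) : 0 ≤ structureFunction μ u g :=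
  integral_nonneg fun _ => sq_nonneg _

variable [MeasurableAdd G] [μ.IsAddRightInvariant]

lemma integrable_norm_sub_comp_add_right_sq {u : G → E} (hu : MemLp u 2 μ) (g : G) :
    Integrable (fun x => ‖u (x + g) - u x‖ ^ 2) μ :=
  ((hu.comp_measurePreserving (measurePreserving_add_right μ g)).sub hu).integrable_norm_pow
    two_ne_zero

lemma structureFunction_add_le {u : G → E} (hu : MemLp u 2 μ) (g h : G) :
    structureFunction μ u (g + h) ≤ 2 * structureFunction μ u g + 2 * structureFunction μ u h := by
  have hsplit (x : G) :
      u (x + (g + h)) - u x = (u (x + h + g) - u (x + h)) + (u (x + h) - u x) := by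
    rw [add_comm g, ← add_assoc]; abel
  have hint_g := integrable_norm_sub_comp_add_right_sq μ hu g
  have hint_h := integrable_norm_sub_comp_add_right_sq μ hu h
  have hshift : ∫ x, ‖u (x + h + g) - u (x + h)‖ ^ 2 ∂μ = structureFunction μ u g :=
    integral_add_right_eq_self (fun x => ‖u (x + g) - u x‖ ^ 2) h
  calc structureFunction μ u (g + h)
      ≤ ∫ x, (2 * ‖u (x + h + g) - u (x + h)‖ ^ 2 + 2 * ‖u (x + h) - u x‖ ^ 2) ∂μ := by
        refine integral_mono (integrable_norm_sub_comp_add_right_sq μ hu (g + h))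
          (((hint_g.comp_add_right h).const_mul 2).add (hint_h.const_mul 2)) fun x => ?_
        rw [hsplit x]
        have := (pow_le_pow_left₀ (norm_nonneg _)
          (norm_add_le (u (x + h + g) - u (x + h)) (u (x + h) - u x)) 2).trans add_sq_le
        linarith
    _ = 2 * structureFunction μ u g + 2 * structureFunction μ u h := by
        rw [integral_add ((hint_g.comp_add_right h).const_mul 2) (hint_h.const_mul 2),
          integral_const_mul, integral_const_mul, hshift]
        rfl

end StructureFunction

section BallAverage

variable {E : Type*} [NormedAddCommGroup E] [NormedSpace ℝ E] [FiniteDimensional ℝ E]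
  [MeasurableSpace E] [BorelSpace E] (μ : Measure E) [μ.IsAddHaarMeasure]

lemma measureReal_ball_two_mul (x : E) (r : ℝ) :
    μ.real (ball 0 (2 * r)) = 2 ^ finrank ℝ E * μ.real (ball x r) := by
  rw [measureReal_def, Measure.addHaar_ball_mul_of_pos μ 0 two_pos, ENNReal.toReal_mul,
    ENNReal.toReal_ofReal (by positivity), ← measureReal_def, Measure.addHaar_real_ball_center μ x]

lemma Continuous.integrableOn_ball {F : E → ℝ} (hF : Continuous F) (x : E) (r : ℝ) :
    IntegrableOn F (ball x r) μ :=
  (hF.continuousOn.integrableOn_compact (isCompact_closedBall x r)).mono_set ball_subset_closedBall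

lemma mul_le_four_mul_setIntegral_ball_midpoint {F : E → ℝ} (hF : Continuous F) {ℓ : E}
    (hquasi : ∀ x, F ℓ ≤ 2 * F (ℓ - x) + 2 * F x) (r : ℝ) :
    μ.real (ball ((2 : ℝ)⁻¹ • ℓ) r) * F ℓ ≤ 4 * ∫ x in ball ((2 : ℝ)⁻¹ • ℓ) r, F x ∂μ := by
  set B := ball ((2 : ℝ)⁻¹ • ℓ) r
  have hB : (ℓ - ·) ⁻¹' B = B := by
    ext x
    simp only [B, Set.mem_preimage, mem_ball, dist_eq_norm]
    rw [← norm_neg]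
    congr! 2
    module
  have hreflect : ∫ x in B, F (ℓ - x) ∂μ = ∫ x in B, F x ∂μ := by
    conv_lhs => rw [← hB]
    exact (Measure.measurePreserving_sub_left μ ℓ).setIntegral_preimage_emb
      (Homeomorph.subLeft ℓ).measurableEmbedding F B
  have hint : IntegrableOn F B μ := hF.integrableOn_ball μ _ _
  have hint' : IntegrableOn (fun x => F (ℓ - x)) B μ :=
    (hF.comp (continuous_const.sub continuous_id)).integrableOn_ball μ _ _
  calc μ.real B * F ℓ = ∫ _ in B, F ℓ ∂μ := by rw [setIntegral_const, smul_eq_mul]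
    _ ≤ ∫ x in B, (2 * F (ℓ - x) + 2 * F x) ∂μ :=
        setIntegral_mono_on (integrableOn_const measure_ball_lt_top.ne)
          ((hint'.const_mul 2).add (hint.const_mul 2)) measurableSet_ball fun x _ => hquasi x
    _ = 4 * ∫ x in B, F x ∂μ := by
        rw [integral_add (hint'.const_mul 2) (hint.const_mul 2), integral_const_mul,
          integral_const_mul, hreflect]
        ring

lemma le_two_pow_mul_setAverage_ball {F : E → ℝ} (hF : Continuous F) (hF_nonneg : ∀ x, 0 ≤ F x)
    (hquasi : ∀ ℓ x, F ℓ ≤ 2 * F (ℓ - x) + 2 * F x) {ℓ : E} (hℓ : ℓ ≠ 0) :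
    F ℓ ≤ 2 ^ (finrank ℝ E + 2) * ⨍ x in ball 0 ‖ℓ‖, F x ∂μ := by
  have hL : 0 < ‖ℓ‖ := norm_pos_iff.2 hℓ
  set B := ball ((2 : ℝ)⁻¹ • ℓ) (‖ℓ‖ / 2)
  have hsub : B ⊆ ball 0 ‖ℓ‖ := ball_subset_ball' <| by
    rw [dist_zero_right, norm_smul, Real.norm_of_nonneg (by norm_num)]
    linarith
  have hvol : μ.real (ball 0 ‖ℓ‖) = 2 ^ finrank ℝ E * μ.real B := by
    rw [← measureReal_ball_two_mul μ _ (‖ℓ‖ / 2), mul_div_cancel₀ _ two_ne_zero]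
  have hBpos : 0 < μ.real B :=
    ENNReal.toReal_pos (measure_ball_pos μ _ (half_pos hL)).ne' measure_ball_lt_top.ne
  have hmid : μ.real B * F ℓ ≤ 4 * ∫ x in B, F x ∂μ :=
    mul_le_four_mul_setIntegral_ball_midpoint μ hF (hquasi ℓ) _
  have hmono : ∫ x in B, F x ∂μ ≤ ∫ x in ball 0 ‖ℓ‖, F x ∂μ :=
    setIntegral_mono_set (hF.integrableOn_ball μ _ _) (.of_forall hF_nonneg) hsub.eventuallyLE
  rw [setAverage_eq, smul_eq_mul, hvol, pow_add]
  calc F ℓ ≤ 4 * (∫ x in ball 0 ‖ℓ‖, F x ∂μ) / μ.real B := by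
        rw [le_div_iff₀' hBpos]; linarith
    _ = _ := by field_simp; ring

end BallAverage

theorem pointwise_from_ball_averaged_structure_function_general {d : ℕ}
    (u : Td d → EuclideanSpace ℝ (Fin d)) (hu : MemLp u 2 volume)
    (F : EuclideanSpace ℝ (Fin d) → ℝ)
    (hF : F = fun ℓ => ∫ x, ‖du u ℓ x‖ ^ 2)
    (hFcont : Continuous F) (hF0 : F 0 = 0)
    (C s : ℝ) (hC : 0 < C) (hs : 0 < s)
    (havg : ∀ L : ℝ, 0 < L →
      (⨍ ℓ in ball (0 : EuclideanSpace ℝ (Fin d)) L, F ℓ) ≤ C * L ^ (2 * s)) :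
    ∃ C' : ℝ, 0 < C' ∧ ∀ ℓ : EuclideanSpace ℝ (Fin d), F ℓ ≤ C' * ‖ℓ‖ ^ (2 * s) := by
  have hF_eq (ℓ : EuclideanSpace ℝ (Fin d)) :
      F ℓ = structureFunction volume u (fun i => (ℓ i : AddCircle (1 : ℝ))) := by
    rw [hF]; rfl
  have hquasi (ℓ x : EuclideanSpace ℝ (Fin d)) : F ℓ ≤ 2 * F (ℓ - x) + 2 * F x := by
    have hcoe : (fun i => (ℓ i : AddCircle (1 : ℝ)))
        = (fun i => ((ℓ - x) i : AddCircle (1 : ℝ))) + fun i => (x i : AddCircle (1 : ℝ)) := by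
      funext i; simp
    simpa only [hF_eq, hcoe] using structureFunction_add_le volume hu _ _
  refine ⟨2 ^ (d + 2) * C, by positivity, fun ℓ => ?_⟩
  rcases eq_or_ne ℓ 0 with rfl | hℓ
  · simp [hF0, Real.zero_rpow (by positivity : 2 * s ≠ 0)]
  calc F ℓ ≤ 2 ^ (d + 2) * ⨍ x in ball 0 ‖ℓ‖, F x := by
        simpa only [finrank_euclideanSpace_fin] using le_two_pow_mul_setAverage_ball volume hFcont
          (fun ℓ => hF_eq ℓ ▸ structureFunction_nonneg _ _ _) hquasi hℓ
    _ ≤ 2 ^ (d + 2) * (C * ‖ℓ‖ ^ (2 * s)) := by gcongr; exact havg _ (norm_pos_iff.2 hℓ)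
    _ = 2 ^ (d + 2) * C * ‖ℓ‖ ^ (2 * s) := by ring

/-- **Upgrading ball-averaged control of `F(ℓ) = ‖δ_ℓ u‖_{L²}²` to pointwise control.**
Let `u ∈ L²(𝕋ᵈ)` and `F(ℓ) = ∫_{𝕋ᵈ} |δ_ℓ u|² dx`, so `F` is continuous with `F(0) = 0`
and `√F` is translation-subadditive.  If `⨍_{B_L(0)} F(ℓ) dℓ ≤ C L^{2s}` for all `L > 0`
(for some `C > 0`, `s ∈ (0,1]`), then `F(ℓ) ≤ C' |ℓ|^{2s}` for all `ℓ`, where `C'` depends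
only on `C, s, d`. -/
theorem pointwise_from_ball_averaged_structure_function {d : ℕ}
    (u : Td d → EuclideanSpace ℝ (Fin d)) (hu : MemLp u 2 volume)
    (F : EuclideanSpace ℝ (Fin d) → ℝ)
    (hF : F = fun ℓ => ∫ x, ‖du u ℓ x‖ ^ 2)
    (hFcont : Continuous F) (hF0 : F 0 = 0)
    (C s : ℝ) (hC : 0 < C) (hs : 0 < s) (hs1 : s ≤ 1)
    (havg : ∀ L : ℝ, 0 < L →
      (⨍ ℓ in ball (0 : EuclideanSpace ℝ (Fin d)) L, F ℓ) ≤ C * L ^ (2 * s)) :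
    ∃ C' : ℝ, 0 < C' ∧ ∀ ℓ : EuclideanSpace ℝ (Fin d), F ℓ ≤ C' * ‖ℓ‖ ^ (2 * s) :=
  pointwise_from_ball_averaged_structure_function_general u hu F hF hFcont hF0 C s hC hs havg
end
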